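/- arXiv:1906.04819 — 5 statements merged into one kernel-verified Lean document; each statement's English description precedes it below -/
import Mathlib

section
/- Let X ∈ ℝ^{d×n} be a matrix with columns x_1,…,x_n and y ∈ ℝ^n, and assume X·Xᵀ is invertible. Let w* = (X·Xᵀ)^{-1}·X·y. Let {i_1,…,i_n} be a permutation of {1,…,n}, let P_m = (e_{i_1},…,e_{i_m}) ∈ ℝ^{n×m} be the matrix whose columns are the corresponding standard basis vectors of ℝ^n, and assume X·P_m·P_mᵀ·Xᵀ is invertible. Let w_m = (X·P_m·P_mᵀ·Xᵀ)^{-1}·X·P_m·P_mᵀ·y. Then (X·P_m·P_mᵀ·Xᵀ)(w* − w_m) = X·(I − P_m·P_mᵀ)(y − Xᵀ·w*). -/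
open Matrix

/-- Lemma 2 (least squares): the relation between the full least-squares solution `w*`
and the solution `w_m` computed from the `m` selected samples. -/
theorem stmt0 (d n m : ℕ) (hm : m ≤ n)
    (X : Matrix (Fin d) (Fin n) ℝ) (y : Fin n → ℝ)
    (σ : Equiv.Perm (Fin n))
    (P : Matrix (Fin n) (Fin m) ℝ)
    (hP : ∀ (i : Fin n) (j : Fin m), P i j = if i = σ (Fin.castLE hm j) then 1 else 0)
    (hXX : IsUnit (X * Xᵀ))
    (hXPP : IsUnit (X * P * Pᵀ * Xᵀ))
    (wstar wm : Fin d → ℝ)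
    (hws : wstar = (X * Xᵀ)⁻¹ *ᵥ (X *ᵥ y))
    (hwm : wm = (X * P * Pᵀ * Xᵀ)⁻¹ *ᵥ ((X * P * Pᵀ) *ᵥ y)) :
    (X * P * Pᵀ * Xᵀ) *ᵥ (wstar - wm) = X *ᵥ ((1 - P * Pᵀ) *ᵥ (y - Xᵀ *ᵥ wstar)) := by
  have hdXX : IsUnit (X * Xᵀ).det := (isUnit_iff_isUnit_det _).mp hXX
  have hdA : IsUnit (X * P * Pᵀ * Xᵀ).det := (isUnit_iff_isUnit_det _).mp hXPP
  have h1 : (X * Xᵀ) *ᵥ wstar = X *ᵥ y := by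
    rw [hws, mulVec_mulVec, mul_nonsing_inv _ hdXX, one_mulVec]
  have h2 : (X * P * Pᵀ * Xᵀ) *ᵥ wm = (X * P * Pᵀ) *ᵥ y := by
    rw [hwm, mulVec_mulVec, mul_nonsing_inv _ hdA, one_mulVec]
  have h3 : Xᵀ *ᵥ wstar = (Xᵀ) *ᵥ wstar := rfl
  calc (X * P * Pᵀ * Xᵀ) *ᵥ (wstar - wm)
      = (X * P * Pᵀ * Xᵀ) *ᵥ wstar - (X * P * Pᵀ) *ᵥ y := by
        rw [mulVec_sub, h2]
    _ = X *ᵥ ((1 - P * Pᵀ) *ᵥ (y - Xᵀ *ᵥ wstar)) := by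
        rw [mulVec_mulVec, Matrix.mul_sub, Matrix.mul_one, sub_mulVec, mulVec_sub, mulVec_sub,
          mulVec_mulVec, mulVec_mulVec, ← Matrix.mul_assoc, h1]
        abel
end

section
/- Let X ∈ ℝ^{d×n} with columns x_1,…,x_n, y ∈ ℝ^n, and f_i(w) = (1/2)(y_i − x_iᵀw)². Assume X·Xᵀ is invertible and let w* = (X·Xᵀ)^{-1}·X·y. Assume ‖∇f_i(w*)‖ ≤ L_i for all i, where ∇f_i(w*) = −(y_i − x_iᵀw*)·x_i. Let {i_1,…,i_n} be a permutation of {1,…,n} and for each m let P_m = (e_{i_1},…,e_{i_m}) ∈ ℝ^{n×m}. Suppose there exists m_0 such that X·P_{m_0}·P_{m_0}ᵀ·Xᵀ has full rank d with smallest eigenvalue b > 0. Then for every m ≥ m_0, with w_m = (X·P_m·P_mᵀ·Xᵀ)^{-1}·X·P_m·P_mᵀ·y, it holds that ‖w* − w_m‖² ≤ (1/b²)·(∑_{k=m+1}^{n} L_{i_k})². -/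
/-!
With `r = Xᵀ w* - y` the residual, the normal equations say `X r = ∑ᵢ rᵢ xᵢ = 0`. The subset
solution satisfies `A_m (w* - w_m) = ∑_{i selected} rᵢ xᵢ = -∑_{i not selected} rᵢ xᵢ`, where
`A_m = X P_m P_mᵀ Xᵀ` dominates `A_{m₀} ⪰ b I`. Hence
`b ‖w* - w_m‖² ≤ ⟪w* - w_m, A_m (w* - w_m)⟫ ≤ ‖w* - w_m‖ ∑_{i not selected} ‖rᵢ xᵢ‖`,
and each `‖rᵢ xᵢ‖ = ‖∇fᵢ(w*)‖ ≤ Lᵢ`.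
-/

open Matrix

section
variable {κ ι : Type*} [Fintype ι]

lemma toLp_mulVec_eq_sum (X : Matrix κ ι ℝ) (u : ι → ℝ) :
    WithLp.toLp 2 (X *ᵥ u) = ∑ i, u i • WithLp.toLp 2 (Xᵀ i) := by
  ext j
  simp [mulVec, dotProduct, mul_comm]

variable [Fintype κ]

lemma dotProduct_le_norm_toLp_mul_norm_toLp (v w : κ → ℝ) :
    v ⬝ᵥ w ≤ ‖WithLp.toLp 2 v‖ * ‖WithLp.toLp 2 w‖ := by
  simpa [EuclideanSpace.inner_toLp_toLp, dotProduct_comm] using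
    real_inner_le_norm (WithLp.toLp 2 v) (WithLp.toLp 2 w)

lemma norm_toLp_le_norm_toLp_mulVec_div_of_coercive {A : Matrix κ κ ℝ} {b : ℝ} (hb : 0 < b)
    (hA : ∀ v, b * ‖WithLp.toLp 2 v‖ ^ 2 ≤ v ⬝ᵥ (A *ᵥ v)) (v : κ → ℝ) :
    ‖WithLp.toLp 2 v‖ ≤ ‖WithLp.toLp 2 (A *ᵥ v)‖ / b := by
  rw [le_div_iff₀ hb]
  rcases (norm_nonneg (WithLp.toLp 2 v)).eq_or_lt with hv | hv
  · rw [← hv]; simp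
  · refine le_of_mul_le_mul_left ?_ hv
    calc ‖WithLp.toLp 2 v‖ * (‖WithLp.toLp 2 v‖ * b) = b * ‖WithLp.toLp 2 v‖ ^ 2 := by ring
      _ ≤ v ⬝ᵥ (A *ᵥ v) := hA v
      _ ≤ ‖WithLp.toLp 2 v‖ * ‖WithLp.toLp 2 (A *ᵥ v)‖ :=
        dotProduct_le_norm_toLp_mul_norm_toLp _ _

lemma isUnit_det_of_coercive [DecidableEq κ] {A : Matrix κ κ ℝ} {b : ℝ} (hb : 0 < b)
    (hA : ∀ v, b * ‖WithLp.toLp 2 v‖ ^ 2 ≤ v ⬝ᵥ (A *ᵥ v)) : IsUnit A.det := by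
  rw [isUnit_iff_ne_zero, Ne, ← exists_mulVec_eq_zero_iff]
  rintro ⟨v, hv, hAv⟩
  exact hv (by simpa [hAv] using norm_toLp_le_norm_toLp_mulVec_div_of_coercive hb hA v)

lemma mulVec_nonsing_inv_mulVec [DecidableEq κ] {A : Matrix κ κ ℝ} (hA : IsUnit A.det)
    (v : κ → ℝ) :
    A *ᵥ (A⁻¹ *ᵥ v) = v := by
  rw [mulVec_mulVec, mul_nonsing_inv A hA, one_mulVec]

variable [DecidableEq ι]

lemma dotProduct_mul_diagonal_mul_transpose_mulVec (X : Matrix κ ι ℝ) (w : ι → ℝ) (v : κ → ℝ) :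
    v ⬝ᵥ ((X * diagonal w * Xᵀ) *ᵥ v) = ∑ i, w i * (Xᵀ *ᵥ v) i ^ 2 := by
  rw [← mulVec_mulVec, ← mulVec_mulVec, dotProduct_mulVec, ← mulVec_transpose]
  simp [dotProduct, mulVec_diagonal, sq, mul_left_comm]

lemma dotProduct_mul_diagonal_mul_transpose_mulVec_mono (X : Matrix κ ι ℝ) {w w' : ι → ℝ}
    (h : w ≤ w') (v : κ → ℝ) :
    v ⬝ᵥ ((X * diagonal w * Xᵀ) *ᵥ v) ≤ v ⬝ᵥ ((X * diagonal w' * Xᵀ) *ᵥ v) := by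
  simp only [dotProduct_mul_diagonal_mul_transpose_mulVec]
  gcongr with i
  exact h i

theorem norm_sub_le_of_weighted_normal_eq (X : Matrix κ ι ℝ) (w y : ι → ℝ) {wstar wm : κ → ℝ}
    {b : ℝ} (hb : 0 < b)
    (hA : ∀ v, b * ‖WithLp.toLp 2 v‖ ^ 2 ≤ v ⬝ᵥ ((X * diagonal w * Xᵀ) *ᵥ v))
    (hstar : X *ᵥ (Xᵀ *ᵥ wstar - y) = 0)
    (hwm : (X * diagonal w * Xᵀ) *ᵥ wm = (X * diagonal w) *ᵥ y) :
    ‖WithLp.toLp 2 (wstar - wm)‖ ≤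
      (∑ i, |1 - w i| * ‖WithLp.toLp 2 ((Xᵀ *ᵥ wstar - y) i • Xᵀ i)‖) / b := by
  set r := Xᵀ *ᵥ wstar - y
  have hres : (X * diagonal w * Xᵀ) *ᵥ (wstar - wm) = -(X *ᵥ ((1 - w) * r)) := by
    calc (X * diagonal w * Xᵀ) *ᵥ (wstar - wm) = X *ᵥ (w * r) := by
          rw [mulVec_sub, hwm, ← mulVec_mulVec, ← mulVec_mulVec, ← mulVec_mulVec, ← mulVec_sub,
            ← mulVec_sub]
          exact congrArg (X *ᵥ ·) (funext (mulVec_diagonal w r))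
      _ = -(X *ᵥ ((1 - w) * r)) := by
          rw [sub_mul, one_mul, mulVec_sub, hstar]; simp
  refine (norm_toLp_le_norm_toLp_mulVec_div_of_coercive hb hA _).trans
    (div_le_div_of_nonneg_right ?_ hb.le)
  rw [hres, WithLp.toLp_neg, norm_neg, toLp_mulVec_eq_sum]
  refine (norm_sum_le _ _).trans (Finset.sum_le_sum fun i _ => ?_)
  rw [Pi.mul_apply, mul_smul, norm_smul, Real.norm_eq_abs, ← WithLp.toLp_smul]
  rfl

end

def prefixWeight {n : ℕ} (σ : Equiv.Perm (Fin n)) (m : ℕ) (i : Fin n) : ℝ :=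
  if (σ.symm i : ℕ) < m then 1 else 0

lemma prefixWeight_mono {n m₀ m : ℕ} (σ : Equiv.Perm (Fin n)) (h : m₀ ≤ m) :
    prefixWeight σ m₀ ≤ prefixWeight σ m := fun i => by
  unfold prefixWeight
  split_ifs <;> norm_num
  omega

lemma sum_abs_one_sub_prefixWeight_mul {n : ℕ} (σ : Equiv.Perm (Fin n)) (m : ℕ)
    (g : Fin n → ℝ) :
    ∑ i, |1 - prefixWeight σ m i| * g i =
      ∑ k ∈ Finset.univ.filter (fun k : Fin n => m ≤ (k : ℕ)), g (σ k) := by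
  rw [← Equiv.sum_comp σ, Finset.sum_filter]
  refine Finset.sum_congr rfl fun k _ => ?_
  simp only [prefixWeight, Equiv.symm_apply_apply]
  split_ifs <;> first | omega | simp

lemma mul_transpose_eq_diagonal_prefixWeight {n m : ℕ} (σ : Equiv.Perm (Fin n)) (hm : m ≤ n)
    (P : Matrix (Fin n) (Fin m) ℝ)
    (hP : ∀ i j, P i j = if i = σ (Fin.castLE hm j) then 1 else 0) :
    P * Pᵀ = diagonal (prefixWeight σ m) := by
  ext i i'
  have hsel : ∀ i (x : Fin m), i = σ (Fin.castLE hm x) ↔ (σ.symm i : ℕ) = x := fun i x => by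
    rw [← σ.symm_apply_eq, Fin.ext_iff, Fin.val_castLE]
  simp only [mul_apply, transpose_apply, hP, hsel, diagonal_apply, prefixWeight, ← ite_and,
    mul_ite, mul_one, mul_zero]
  by_cases hi : (σ.symm i : ℕ) < m
  · rw [Finset.sum_eq_single_of_mem ⟨_, hi⟩ (Finset.mem_univ _)]
    · simp [Fin.val_inj, σ.symm.injective.eq_iff, eq_comm, hi]
    · intro x _ hx
      rw [if_neg]
      exact fun h => hx (Fin.ext h.2.symm)
  · rw [Finset.sum_eq_zero, if_neg (fun h => hi h.2)]
    rintro x -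
    rw [if_neg]
    rintro ⟨-, h⟩
    exact hi (h ▸ x.isLt)

theorem stmt2_general (d n : ℕ)
    (X : Matrix (Fin d) (Fin n) ℝ) (y : Fin n → ℝ)
    (hXX : IsUnit (X * Xᵀ))
    (wstar : Fin d → ℝ) (hws : wstar = (X * Xᵀ)⁻¹ *ᵥ (X *ᵥ y))
    (L : Fin n → ℝ)
    (hL : ∀ i, ‖(WithLp.equiv 2 (Fin d → ℝ)).symm
        (fun j => -(y i - ∑ j', X j' i * wstar j') * X j i)‖ ≤ L i)
    (σ : Equiv.Perm (Fin n))
    (P : (m : ℕ) → m ≤ n → Matrix (Fin n) (Fin m) ℝ)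
    (hP : ∀ (m : ℕ) (hm : m ≤ n) (i : Fin n) (j : Fin m),
      P m hm i j = if i = σ (Fin.castLE hm j) then 1 else 0)
    (m₀ : ℕ) (hm₀ : m₀ ≤ n) (b : ℝ) (hb : 0 < b)
    (heig : ∀ v : Fin d → ℝ,
      b * ‖(WithLp.equiv 2 (Fin d → ℝ)).symm v‖ ^ 2 ≤
        v ⬝ᵥ ((X * P m₀ hm₀ * (P m₀ hm₀)ᵀ * Xᵀ) *ᵥ v)) :
    ∀ (m : ℕ) (hm : m ≤ n), m₀ ≤ m →
      ∀ wm : Fin d → ℝ,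
        wm = (X * P m hm * (P m hm)ᵀ * Xᵀ)⁻¹ *ᵥ ((X * P m hm * (P m hm)ᵀ) *ᵥ y) →
        ‖(WithLp.equiv 2 (Fin d → ℝ)).symm (wstar - wm)‖ ^ 2 ≤
          (1 / b ^ 2) *
            (∑ k ∈ Finset.univ.filter (fun k : Fin n => m ≤ (k : ℕ)), L (σ k)) ^ 2 := by
  intro m hm hm₀m wm hwm
  set A := X * diagonal (prefixWeight σ m) * Xᵀ
  have hgram : ∀ k hk, X * P k hk * (P k hk)ᵀ = X * diagonal (prefixWeight σ k) := fun k hk => by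
    rw [Matrix.mul_assoc, mul_transpose_eq_diagonal_prefixWeight σ hk _ (hP k hk)]
  simp only [hgram] at heig hwm
  have hA : ∀ v, b * ‖WithLp.toLp 2 v‖ ^ 2 ≤ v ⬝ᵥ (A *ᵥ v) := fun v => (heig v).trans
    (dotProduct_mul_diagonal_mul_transpose_mulVec_mono X (prefixWeight_mono σ hm₀m) v)
  have hstar : X *ᵥ (Xᵀ *ᵥ wstar - y) = 0 := by
    rw [mulVec_sub, mulVec_mulVec, hws,
      mulVec_nonsing_inv_mulVec ((isUnit_iff_isUnit_det _).mp hXX), sub_self]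
  have hwm' : A *ᵥ wm = (X * diagonal (prefixWeight σ m)) *ᵥ y := by
    rw [hwm, mulVec_nonsing_inv_mulVec (isUnit_det_of_coercive hb hA)]
  have hgrad : ∀ i, ‖WithLp.toLp 2 ((Xᵀ *ᵥ wstar - y) i • Xᵀ i)‖ ≤ L i := fun i => by
    convert hL i using 3
    ext j
    simp [mulVec, dotProduct]
  have hdist := norm_sub_le_of_weighted_normal_eq X _ y hb hA hstar hwm'
  rw [sum_abs_one_sub_prefixWeight_mul] at hdist
  calc ‖WithLp.toLp 2 (wstar - wm)‖ ^ 2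
      ≤ ((∑ k ∈ Finset.univ.filter (fun k : Fin n => m ≤ (k : ℕ)), L (σ k)) / b) ^ 2 := by
        gcongr
        exact hdist.trans (by gcongr with k; exact hgrad (σ k))
    _ = _ := by ring

/-- Theorem 3 (Lipschitz bound) for least squares: with `‖∇f_i(w*)‖ ≤ L_i`, the squared
distance between the full least-squares solution `w*` and the subset solution `w_m` is
bounded by `(1/b²) (∑_{k=m+1}^n L_{i_k})²`. -/
theorem stmt2 (d n : ℕ)
    (X : Matrix (Fin d) (Fin n) ℝ) (y : Fin n → ℝ)
    (f : Fin n → (Fin d → ℝ) → ℝ)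
    (hf : ∀ i w, f i w = (1 / 2) * (y i - ∑ j, X j i * w j) ^ 2)
    (hXX : IsUnit (X * Xᵀ))
    (wstar : Fin d → ℝ) (hws : wstar = (X * Xᵀ)⁻¹ *ᵥ (X *ᵥ y))
    (L : Fin n → ℝ)
    (hL : ∀ i, ‖(WithLp.equiv 2 (Fin d → ℝ)).symm
        (fun j => -(y i - ∑ j', X j' i * wstar j') * X j i)‖ ≤ L i)
    (σ : Equiv.Perm (Fin n))
    (P : (m : ℕ) → m ≤ n → Matrix (Fin n) (Fin m) ℝ)
    (hP : ∀ (m : ℕ) (hm : m ≤ n) (i : Fin n) (j : Fin m),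
      P m hm i j = if i = σ (Fin.castLE hm j) then 1 else 0)
    (m₀ : ℕ) (hm₀ : m₀ ≤ n) (b : ℝ) (hb : 0 < b)
    (heig : ∀ v : Fin d → ℝ,
      b * ‖(WithLp.equiv 2 (Fin d → ℝ)).symm v‖ ^ 2 ≤
        v ⬝ᵥ ((X * P m₀ hm₀ * (P m₀ hm₀)ᵀ * Xᵀ) *ᵥ v)) :
    ∀ (m : ℕ) (hm : m ≤ n), m₀ ≤ m →
      ∀ wm : Fin d → ℝ,
        wm = (X * P m hm * (P m hm)ᵀ * Xᵀ)⁻¹ *ᵥ ((X * P m hm * (P m hm)ᵀ) *ᵥ y) →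
        ‖(WithLp.equiv 2 (Fin d → ℝ)).symm (wstar - wm)‖ ^ 2 ≤
          (1 / b ^ 2) *
            (∑ k ∈ Finset.univ.filter (fun k : Fin n => m ≤ (k : ℕ)), L (σ k)) ^ 2 :=
  stmt2_general d n X y hXX wstar hws L hL σ P hP m₀ hm₀ b hb heig
end

section
/- Let h_1,…,h_n : ℝ^d → ℝ, let w_0 ∈ ℝ^d, r > 0, and Ω = B(w_0, r) = {w : ‖w − w_0‖ ≤ r}. Let S ⊆ {1,…,n} be nonempty with complement S^c = {1,…,n} \ S. Assume: (i) for each i ∈ S^c there is L_i > 0 with |h_i(w') − h_i(w_0)| ≤ L_i‖w' − w_0‖ for all w' ∈ Ω (local Lipschitz continuity at w_0); (ii) h_S = ∑_{i∈S} h_i attains a minimum over Ω at some w_S* ∈ Ω with w_S* ≠ w_0, and h_S(w_0) − h_S(w_S*) ≥ (μ|S|/2)‖w_0 − w_S*‖² for some μ > 0 (local one-point strong convexity at w_0). If ζ := 2·(∑_{i∈S^c} L_i) / (μ·|S|·‖w_0 − w_S*‖) < 1, then h_{S^c} = ∑_{i∈S^c} h_i is ζ-insignificant at w_0 with respect to (h_S,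 Ω), i.e. |h_{S^c}(w_S*) − h_{S^c}(w_0)| ≤ ζ·(h_S(w_0) − h_S(w_S*)). -/
/-! Summing the Lipschitz bounds gives `|h_{Sᶜ}(w_S*) − h_{Sᶜ}(w₀)| ≤ (∑ L_i) t` with
`t = ‖w₀ − w_S*‖`, while one-point strong convexity gives `h_S(w₀) − h_S(w_S*) ≥ c t²` with
`c = μ|S|/2`. Since `ζ = (∑ L_i) / (c t)`, multiplying the second bound by `ζ` recovers the first. -/

theorem Finset.abs_sum_sub_sum_le {ι : Type*} {s : Finset ι} {a b L : ι → ℝ} {t : ℝ}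
    (h : ∀ i ∈ s, |a i - b i| ≤ L i * t) :
    |∑ i ∈ s, a i - ∑ i ∈ s, b i| ≤ (∑ i ∈ s, L i) * t := by
  rw [← Finset.sum_sub_distrib, Finset.sum_mul]
  exact (Finset.abs_sum_le_sum_abs _ _).trans (Finset.sum_le_sum h)

theorem le_div_mul_of_le_mul_of_mul_sq_le {a K c t Δ : ℝ} (ha : 0 ≤ a) (hc : 0 < c)
    (hK : a ≤ K * t) (hΔ : c * t ^ 2 ≤ Δ) : a ≤ K / (c * t) * Δ := by
  have hζc : K / (c * t) * (c * t ^ 2) = K * t := by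
    rcases eq_or_ne t 0 with rfl | ht
    · simp
    · field_simp
  have hζ : 0 ≤ K / (c * t) := by
    rcases eq_or_ne t 0 with rfl | ht
    · simp
    · have : 0 < c * t ^ 2 := by positivity
      exact nonneg_of_mul_nonneg_left (hζc ▸ ha.trans hK) this
  calc a ≤ K * t := hK
    _ = K / (c * t) * (c * t ^ 2) := hζc.symm
    _ ≤ K / (c * t) * Δ := mul_le_mul_of_nonneg_left hΔ hζ

theorem stmt7_general (d n : ℕ) (h : Fin n → EuclideanSpace ℝ (Fin d) → ℝ)
    (w₀ : EuclideanSpace ℝ (Fin d)) (r : ℝ)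
    (S : Finset (Fin n)) (hS : S.Nonempty)
    (L : Fin n → ℝ)
    (hlip : ∀ i ∈ Sᶜ, ∀ w' ∈ Metric.closedBall w₀ r,
      |h i w' - h i w₀| ≤ L i * ‖w' - w₀‖)
    (μ : ℝ) (hμ : 0 < μ)
    (wS : EuclideanSpace ℝ (Fin d)) (hwS : wS ∈ Metric.closedBall w₀ r)
    (hopsc : ∑ i ∈ S, h i w₀ - ∑ i ∈ S, h i wS ≥ μ * S.card / 2 * ‖w₀ - wS‖ ^ 2)
    (ζ : ℝ) (hζdef : ζ = 2 * (∑ i ∈ Sᶜ, L i) / (μ * S.card * ‖w₀ - wS‖)) :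
    |∑ i ∈ Sᶜ, h i wS - ∑ i ∈ Sᶜ, h i w₀| ≤
      ζ * (∑ i ∈ S, h i w₀ - ∑ i ∈ S, h i wS) := by
  have hc : 0 < μ * S.card / 2 := by
    have := hS.card_pos
    positivity
  have hsumlip : |∑ i ∈ Sᶜ, h i wS - ∑ i ∈ Sᶜ, h i w₀| ≤ (∑ i ∈ Sᶜ, L i) * ‖w₀ - wS‖ :=
    Finset.abs_sum_sub_sum_le fun i hi => norm_sub_rev wS w₀ ▸ hlip i hi wS hwS
  have hζ : ζ = (∑ i ∈ Sᶜ, L i) / (μ * S.card / 2 * ‖w₀ - wS‖) := by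
    rw [hζdef]
    ring
  rw [hζ]
  exact le_div_mul_of_le_mul_of_mul_sq_le (abs_nonneg _) hc hsumlip hopsc

/-- Theorem 4 (first part): under local Lipschitz continuity of the discarded losses and
local one-point strong convexity of `h_S` at `w₀`, if
`ζ = 2(∑_{i∈Sᶜ} L_i)/(μ|S|‖w₀ − w_S*‖) < 1` then `h_{Sᶜ}` is `ζ`-insignificant at `w₀`
w.r.t. `(h_S, B(w₀, r))`. -/
theorem stmt7 (d n : ℕ) (h : Fin n → EuclideanSpace ℝ (Fin d) → ℝ)
    (w₀ : EuclideanSpace ℝ (Fin d)) (r : ℝ) (hr : 0 < r)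
    (S : Finset (Fin n)) (hS : S.Nonempty)
    (L : Fin n → ℝ) (hLpos : ∀ i ∈ Sᶜ, 0 < L i)
    (hlip : ∀ i ∈ Sᶜ, ∀ w' ∈ Metric.closedBall w₀ r,
      |h i w' - h i w₀| ≤ L i * ‖w' - w₀‖)
    (μ : ℝ) (hμ : 0 < μ)
    (wS : EuclideanSpace ℝ (Fin d)) (hwS : wS ∈ Metric.closedBall w₀ r) (hwS0 : wS ≠ w₀)
    (hmin : ∀ w' ∈ Metric.closedBall w₀ r, ∑ i ∈ S, h i wS ≤ ∑ i ∈ S, h i w')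
    (hopsc : ∑ i ∈ S, h i w₀ - ∑ i ∈ S, h i wS ≥ μ * S.card / 2 * ‖w₀ - wS‖ ^ 2)
    (ζ : ℝ) (hζdef : ζ = 2 * (∑ i ∈ Sᶜ, L i) / (μ * S.card * ‖w₀ - wS‖))
    (hζ : ζ < 1) :
    |∑ i ∈ Sᶜ, h i wS - ∑ i ∈ Sᶜ, h i w₀| ≤
      ζ * (∑ i ∈ S, h i w₀ - ∑ i ∈ S, h i wS) :=
  stmt7_general d n h w₀ r S hS L hlip μ hμ wS hwS hopsc ζ hζdef
end

section
/- Define f_1, f_2 : ℝ → ℝ by f_1(w) = 1.5·w and f_2(w) = −w + 2, restricted to the interval [0, 1]. Define a sequence by w_0 = 0 and, for each t ≥ 0, let i_t ∈ {1, 2} be the index maximizing f_i(w_t) and let w_{t+1} be the minimizer of f_{i_t} over [0, 1]. Then for all k ≥ 0, w_{2k} = 0 and w_{2k+1} = 1; in particular the sequence (w_t) does not converge. -/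
/-- The paper's counterexample for loss-based sample selection: with `f₁(w) = 1.5w` and
`f₂(w) = −w + 2` on `[0,1]`, starting from `w₀ = 0` and always minimizing the sample loss
that is largest at the current iterate, the iterates alternate `0, 1, 0, 1, …` and hence
the sequence does not converge. -/
theorem stmt9 (f : Fin 2 → ℝ → ℝ)
    (hf1 : f 0 = fun w => 1.5 * w) (hf2 : f 1 = fun w => -w + 2)
    (w : ℕ → ℝ) (i : ℕ → Fin 2)
    (hw0 : w 0 = 0)
    (hargmax : ∀ t, ∀ j : Fin 2, f j (w t) ≤ f (i t) (w t))
    (hmem : ∀ t, w (t + 1) ∈ Set.Icc (0 : ℝ) 1)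
    (hargmin : ∀ t, ∀ v ∈ Set.Icc (0 : ℝ) 1, f (i t) (w (t + 1)) ≤ f (i t) v) :
    (∀ k : ℕ, w (2 * k) = 0 ∧ w (2 * k + 1) = 1) ∧
      ¬ ∃ l : ℝ, Filter.Tendsto w Filter.atTop (nhds l) := by
  have step0 : ∀ t, w t = 0 → w (t + 1) = 1 := by
    intro t ht
    have hi : i t = 1 := by
      by_contra h
      have hi0 : i t = 0 := by omega
      have := hargmax t 1
      rw [hi0, hf1, hf2, ht] at this
      norm_num at this
    have h1 := hargmin t 1 (by norm_num)
    rw [hi, hf2] at h1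
    simp only at h1
    have := (hmem t).2
    linarith
  have step1 : ∀ t, w t = 1 → w (t + 1) = 0 := by
    intro t ht
    have hi : i t = 0 := by
      by_contra h
      have hi1 : i t = 1 := by omega
      have := hargmax t 0
      rw [hi1, hf1, hf2, ht] at this
      norm_num at this
    have h1 := hargmin t 0 (by norm_num)
    rw [hi, hf1] at h1
    simp only at h1
    have := (hmem t).1
    linarith
  have key : ∀ k : ℕ, w (2 * k) = 0 ∧ w (2 * k + 1) = 1 := by
    intro k
    induction k with
    | zero => exact ⟨hw0, step0 0 hw0⟩
    | succ n ih =>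
      have h0 : w (2 * (n + 1)) = 0 := by
        have := step1 (2 * n + 1) ih.2
        simpa [mul_add, mul_one, add_assoc] using this
      exact ⟨h0, step0 _ h0⟩
  refine ⟨key, ?_⟩
  rintro ⟨l, hl⟩
  have h0 : Filter.Tendsto (fun k => w (2 * k)) Filter.atTop (nhds l) :=
    hl.comp (Filter.tendsto_atTop_mono (fun n => by simp only [id_eq]; omega) Filter.tendsto_id)
  have h1 : Filter.Tendsto (fun k => w (2 * k + 1)) Filter.atTop (nhds l) :=
    hl.comp (Filter.tendsto_atTop_mono (fun n => by simp only [id_eq]; omega) Filter.tendsto_id)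
  have e0 : (fun k => w (2 * k)) = fun _ => (0 : ℝ) := funext fun k => (key k).1
  have e1 : (fun k => w (2 * k + 1)) = fun _ => (1 : ℝ) := funext fun k => (key k).2
  rw [e0] at h0; rw [e1] at h1
  have l0 : l = 0 := tendsto_nhds_unique h0 tendsto_const_nhds
  have l1 : l = 1 := tendsto_nhds_unique h1 tendsto_const_nhds
  norm_num [l0] at l1
end

section
/- (Deterministic version of the ADASS convergence theorem for the full objective.) Let f_1,…,f_n : ℝ^d → ℝ be differentiable and c-weakly convex for some c > 0, set γ = 1/(2c), fix r > 0, and let F(w) = (1/n)∑_{i=1}^n f_i(w) have a minimizer w*. For each t = 1,…,T let S_t ⊆ {1,…,n} be nonempty with S_t^c its complement, let w_t ∈ ℝ^d with w_{t+1} ∈ B(w_t, r), and define f_S(w) = (1/|S|)∑_{i∈S} f_i(w), F̂_t(w) = |S_t|·(f_{S_t}(w) + ‖w − w_t‖²/(2γ)), F̄_t(w) = (n − |S_t|)·(f_{S_t^c}(w) + ‖w − w_t‖²/(2γ)), F_t(w) = n·(f_{[n]}(w) + ‖w − w_t‖²/(2γ)). Let ŵ_t be the unique minimizer over B(w_t,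 r) of w' ↦ f_{[n]}(w') + ‖w' − w_t‖²/(2γ), and set G_t = (w_t − ŵ_t)/γ, the gradient of the Moreau envelope M_{γ,r}(·; f_{[n]}) at w_t. Assume for each t: (a) F̄_t is ζ_t-insignificant at w_{t+1} with respect to (F_t, B(w_t, r)), with ζ_t ≤ ζ < 1; (b) F(w_t) − F(w*) ≤ δ; (c) F̂_t(w_{t+1}) − F̂_t(w) ≤ θ_{1,t}‖w_t − w‖² + θ_{2,t} for all w ∈ B(w_t, r), where θ_{1,t} ≤ n(1 − ζ)/(24·γ·|S_t|) and θ_{2,t} ≤ θ₂/t. Then (2/(T(T+1)))·∑_{t=1}^T t·‖G_t‖² ≤ 16δ/(γ(T+1)) + (48θ₂/(γ·T(T+1)))·∑_{t=1}^T |S_t|/(n·(1 − ζ_t)). -/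
/-!
The objective `Φ_t(x) = F x + ‖x - w_t‖² / (2γ)` of the ball-constrained proximal step is
`c`-strongly convex, because `1 / (2γ) = c` beats the weak convexity of `F`; hence it grows
quadratically, `Φ_t x ≥ Φ_t ŵ_t + ‖x - ŵ_t‖² / (4γ)`, around its minimiser `ŵ_t` on the ball.
Splitting `F_t = F̂_t + F̄_t`, insignificance of `F̄_t` transfers the inexact optimality of
`w_{t+1}` for `F̂_t` to `Φ_t`, which bounds `Φ_t w_{t+1} - Φ_t ŵ_t` by `‖w_t - ŵ_t‖² / (24γ)`
plus the error `e_t = θ_{2,t} / (n (1 - ζ_t))`. Either `ŵ_t` lies in the next ball, and is a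
competitor for the next envelope value `M_{t+1}`, or the step was so long that `e_t` dominates
`‖w_t - ŵ_t‖²`. Both cases give `‖w_t - ŵ_t‖² / γ ≲ M_t - M_{t+1} + e_t`, and the `t`-weighted
sum of the envelope decrements telescopes to at most `T δ`.
-/

open Finset Filter Topology

-- Also true for `s = ∅`, where `1 / s.card = 0`: this covers `S_t = univ`, whose complement
-- carries the junk average `0`.
lemma card_mul_one_div_card_mul_sum {ι : Type*} (s : Finset ι) (g : ι → ℝ) :
    (s.card : ℝ) * ((1 / s.card) * ∑ i ∈ s, g i) = ∑ i ∈ s, g i := by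
  rcases s.eq_empty_or_nonempty with rfl | hs
  · simp
  · have : (s.card : ℝ) ≠ 0 := by exact_mod_cast hs.card_pos.ne'
    field_simp

lemma card_mul_avg_add_compl {ι : Type*} [Fintype ι] [DecidableEq ι] (S : Finset ι)
    (g : ι → ℝ) (q : ℝ) :
    (S.card : ℝ) * ((1 / S.card) * ∑ i ∈ S, g i + q)
      + ((Fintype.card ι : ℝ) - S.card) * ((1 / Sᶜ.card) * ∑ i ∈ Sᶜ, g i + q)
      = Fintype.card ι * ((1 / Fintype.card ι) * ∑ i, g i + q) := by
  have hcompl : (Fintype.card ι : ℝ) - S.card = Sᶜ.card := by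
    rw [card_compl, Nat.cast_sub (card_le_univ S)]
  have hcard : (Fintype.card ι : ℝ) = S.card + Sᶜ.card := by
    exact_mod_cast (card_add_card_compl S).symm
  have huniv : (Fintype.card ι : ℝ) * ((1 / Fintype.card ι) * ∑ i, g i) = ∑ i, g i := by
    simpa using card_mul_one_div_card_mul_sum univ g
  rw [hcompl]
  linear_combination card_mul_one_div_card_mul_sum S g + card_mul_one_div_card_mul_sum Sᶜ g
    - huniv + sum_add_sum_compl S g - q * hcard

lemma one_sub_mul_sub_le_of_insignificant {α : Type*} {Φ Φhat Φbar : α → ℝ} {x y : α}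
    {ζ e : ℝ} (hsplit : ∀ z, Φ z = Φhat z + Φbar z)
    (hins : |Φbar y - Φbar x| ≤ ζ * (Φ x - Φ y)) (hopt : Φhat x - Φhat y ≤ e) :
    (1 - ζ) * (Φ x - Φ y) ≤ e := by
  linarith [neg_abs_le (Φbar y - Φbar x), hsplit x, hsplit y]

lemma excess_bounds_of_mul_excess_le {a k γ θ₁ θ₂ D Δ : ℝ} (ha : 0 < a) (hk : 1 ≤ k)
    (hγ : 0 < γ) (hD : 0 ≤ D) (hΔ : 0 ≤ Δ) (h : a * Δ ≤ θ₁ * D + θ₂)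
    (hθ₁ : θ₁ ≤ a / (24 * γ * k)) :
    Δ ≤ D / (24 * γ) + θ₂ / a ∧ k * -(θ₂ / a) ≤ D / γ / 24 := by
  have hscaled : Δ - θ₂ / a ≤ D / (24 * γ * k) := by
    refine le_of_mul_le_mul_left ?_ ha
    calc a * (Δ - θ₂ / a) = a * Δ - θ₂ := by field_simp
      _ ≤ θ₁ * D := by linarith
      _ ≤ a / (24 * γ * k) * D := by gcongr
      _ = a * (D / (24 * γ * k)) := by ring
  have hk0 : 0 < k := by linarith
  have hdrop : D / (24 * γ * k) ≤ D / (24 * γ) :=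
    div_le_div_of_nonneg_left hD (by positivity) (le_mul_of_one_le_right (by positivity) hk)
  have hcancel : k * (D / (24 * γ * k)) = D / γ / 24 := by field_simp
  refine ⟨by linarith, ?_⟩
  rw [← hcancel]
  exact mul_le_mul_of_nonneg_left (by linarith) hk0.le

lemma mul_le_of_descent_of_nonneg {t X ΔM e k a θ : ℝ} (ht : 0 ≤ t) (hθ : 0 ≤ θ) (ha : 0 < a)
    (hk : 1 ≤ k) (hX : X ≤ 12 / 5 * ΔM + 24 / 5 * e + 16 / 5 * max e 0) (he : t * e ≤ θ / a) :
    t * X ≤ 12 / 5 * (t * ΔM) + 24 * θ * (k / a) := by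
  have hu : 0 ≤ θ / a := div_nonneg hθ ha.le
  have hmax : t * max e 0 ≤ θ / a := by
    rw [mul_max_of_nonneg _ _ ht, mul_zero]
    exact max_le he hu
  have hku : θ / a ≤ k * (θ / a) := le_mul_of_one_le_left hu hk
  have hX' := mul_le_mul_of_nonneg_left hX ht
  rw [show 24 * θ * (k / a) = 24 * (k * (θ / a)) by ring]
  linarith

lemma mul_le_of_descent_of_neg {t X ΔM e k a θ : ℝ} (ht : 0 ≤ t) (hθ : θ < 0) (ha : 0 < a)
    (hk : 1 ≤ k) (hX : X ≤ 12 / 5 * ΔM + 24 / 5 * e + 16 / 5 * max e 0)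
    (hke : k * -e ≤ X / 24) (he : t * e ≤ θ / a) :
    t * X ≤ 24 / 5 * (t * ΔM) + 24 * θ * (k / a) := by
  have hte : t * e < 0 := he.trans_lt (div_neg_of_neg_of_pos hθ ha)
  have hneg : e < 0 := by
    by_contra! h
    linarith [mul_nonneg ht h]
  rw [max_eq_right hneg.le] at hX
  have hX' := mul_le_mul_of_nonneg_left hX ht
  have hke' := mul_le_mul_of_nonneg_left hke ht
  have he' := mul_le_mul_of_nonneg_left he (zero_le_one.trans hk)
  rw [show 24 * θ * (k / a) = 24 * (k * (θ / a)) by ring]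
  linarith

lemma sum_Icc_mul_sub_succ (M : ℕ → ℝ) (T : ℕ) :
    ∑ t ∈ Icc 1 T, (t : ℝ) * (M t - M (t + 1)) = ∑ t ∈ Icc 1 T, M t - T * M (T + 1) := by
  induction T with
  | zero => simp
  | succ T ih =>
    rw [sum_Icc_succ_top (by omega), sum_Icc_succ_top (by omega), ih]
    push_cast
    ring

lemma sum_Icc_mul_sub_succ_le {M : ℕ → ℝ} {T : ℕ} {M₀ δ : ℝ}
    (hM : ∀ t ∈ Icc 1 T, M t ≤ M₀ + δ) (hM₀ : M₀ ≤ M (T + 1)) :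
    ∑ t ∈ Icc 1 T, (t : ℝ) * (M t - M (t + 1)) ≤ T * δ := by
  have hsum : ∑ t ∈ Icc 1 T, M t ≤ T * (M₀ + δ) := by
    simpa [mul_add] using sum_le_sum hM
  rw [sum_Icc_mul_sub_succ]
  nlinarith [mul_le_mul_of_nonneg_left hM₀ (Nat.cast_nonneg T : (0 : ℝ) ≤ T)]

lemma sum_mul_le_of_descent {T : ℕ} {X M ε k a : ℕ → ℝ} {θ δ M₀ : ℝ}
    (hX : ∀ t ∈ Icc 1 T, X t ≤ 12 / 5 * (M t - M (t + 1)) + 24 / 5 * (ε t / a t)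
      + 16 / 5 * max (ε t / a t) 0)
    (hke : ∀ t ∈ Icc 1 T, k t * -(ε t / a t) ≤ X t / 24) (hk : ∀ t ∈ Icc 1 T, 1 ≤ k t)
    (hε : ∀ t ∈ Icc 1 T, t * ε t ≤ θ) (ha : ∀ t ∈ Icc 1 T, 0 < a t)
    (hM : ∀ t ∈ Icc 1 T, M t ≤ M₀ + δ) (hM₀ : M₀ ≤ M (T + 1)) (hδ : 0 ≤ δ) :
    ∑ t ∈ Icc 1 T, t * X t ≤ 8 * T * δ + 24 * θ * ∑ t ∈ Icc 1 T, k t / a t := by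
  have he : ∀ t ∈ Icc 1 T, t * (ε t / a t) ≤ θ / a t := fun t ht => by
    rw [mul_div_assoc']
    exact div_le_div_of_nonneg_right (hε t ht) (ha t ht).le
  -- For `θ < 0` all `ε t / a t` are negative, and `hke` pays for the negative term
  -- `24 θ k / a` at the price of a larger constant in front of the envelope decrements.
  obtain ⟨C, hC0, hC8, hstep⟩ : ∃ C : ℝ, 0 ≤ C ∧ C ≤ 8 ∧ ∀ t ∈ Icc 1 T,
      t * X t ≤ C * (t * (M t - M (t + 1))) + 24 * θ * (k t / a t) := by
    rcases le_or_gt 0 θ with hθ | hθ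
    · exact ⟨12 / 5, by norm_num, by norm_num, fun t ht =>
        mul_le_of_descent_of_nonneg t.cast_nonneg hθ (ha t ht) (hk t ht) (hX t ht) (he t ht)⟩
    · exact ⟨24 / 5, by norm_num, by norm_num, fun t ht =>
        mul_le_of_descent_of_neg t.cast_nonneg hθ (ha t ht) (hk t ht) (hX t ht) (hke t ht)
          (he t ht)⟩
  have htel := sum_Icc_mul_sub_succ_le hM hM₀
  calc ∑ t ∈ Icc 1 T, t * X t
      ≤ ∑ t ∈ Icc 1 T, (C * (t * (M t - M (t + 1))) + 24 * θ * (k t / a t)) := sum_le_sum hstep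
    _ = C * ∑ t ∈ Icc 1 T, t * (M t - M (t + 1)) + 24 * θ * ∑ t ∈ Icc 1 T, k t / a t := by
      rw [sum_add_distrib, mul_sum, mul_sum]
    _ ≤ 8 * T * δ + 24 * θ * ∑ t ∈ Icc 1 T, k t / a t := by
      nlinarith [mul_le_mul_of_nonneg_left htel hC0,
        mul_le_mul_of_nonneg_right hC8 (mul_nonneg (Nat.cast_nonneg T : (0 : ℝ) ≤ T) hδ)]

lemma two_div_mul_sum_mul_div_le {T : ℕ} {X : ℕ → ℝ} {γ δ θ W : ℝ} (hT : 0 < T) (hγ : 0 < γ)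
    (h : ∑ t ∈ Icc 1 T, t * X t ≤ 8 * T * δ + 24 * θ * W) :
    2 / (T * (T + 1)) * ∑ t ∈ Icc 1 T, (t : ℝ) * (X t / γ) ≤
      16 * δ / (γ * (T + 1)) + 48 * θ / (γ * T * (T + 1)) * W := by
  have hT0 : (0 : ℝ) < T := Nat.cast_pos.2 hT
  calc 2 / (T * (T + 1)) * ∑ t ∈ Icc 1 T, (t : ℝ) * (X t / γ)
      = 2 / (T * (T + 1) * γ) * ∑ t ∈ Icc 1 T, t * X t := by
        simp only [mul_div_assoc', ← sum_div]
        field_simp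
    _ ≤ 2 / (T * (T + 1) * γ) * (8 * T * δ + 24 * θ * W) := by gcongr
    _ = 16 * δ / (γ * (T + 1)) + 48 * θ / (γ * T * (T + 1)) * W := by field_simp; ring

section MoreauEnvelope

variable {E : Type*} [NormedAddCommGroup E]

noncomputable def moreauObjective (φ : E → ℝ) (γ : ℝ) (w x : E) : ℝ :=
  φ x + ‖x - w‖ ^ 2 / (2 * γ)

/-- The paper's `M_{γ,r}(w; φ)`, written as an infimum so that it makes sense at points where
no minimiser is given, such as the last iterate `w_{T+1}`. -/
noncomputable def ballMoreauEnvelope (φ : E → ℝ) (γ r : ℝ) (w : E) : ℝ :=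
  ⨅ x : Metric.closedBall w r, moreauObjective φ γ w x

variable {φ : E → ℝ} {γ r m : ℝ} {w x : E}

lemma le_moreauObjective (hφ : ∀ y, m ≤ φ y) (hγ : 0 < γ) (x : E) :
    m ≤ moreauObjective φ γ w x := by
  unfold moreauObjective
  linarith [hφ x, (by positivity : 0 ≤ ‖x - w‖ ^ 2 / (2 * γ))]

lemma ballMoreauEnvelope_le (hφ : ∀ y, m ≤ φ y) (hγ : 0 < γ)
    (hx : x ∈ Metric.closedBall w r) :
    ballMoreauEnvelope φ γ r w ≤ moreauObjective φ γ w x :=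
  ciInf_le ⟨m, by rintro _ ⟨y, rfl⟩; exact le_moreauObjective hφ hγ y⟩
    (⟨x, hx⟩ : Metric.closedBall w r)

lemma le_ballMoreauEnvelope (hφ : ∀ y, m ≤ φ y) (hγ : 0 < γ) (hr : 0 ≤ r) :
    m ≤ ballMoreauEnvelope φ γ r w :=
  have : Nonempty (Metric.closedBall w r) := ⟨⟨w, Metric.mem_closedBall_self hr⟩⟩
  le_ciInf fun x => le_moreauObjective hφ hγ x

lemma ballMoreauEnvelope_le_self (hφ : ∀ y, m ≤ φ y) (hγ : 0 < γ) (hr : 0 ≤ r) :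
    ballMoreauEnvelope φ γ r w ≤ φ w := by
  simpa [moreauObjective] using ballMoreauEnvelope_le hφ hγ (Metric.mem_closedBall_self hr)

lemma IsMinOn.ballMoreauEnvelope_eq {ŵ : E} (hφ : ∀ y, m ≤ φ y) (hγ : 0 < γ)
    (hmin : IsMinOn (moreauObjective φ γ w) (Metric.closedBall w r) ŵ)
    (hŵ : ŵ ∈ Metric.closedBall w r) :
    ballMoreauEnvelope φ γ r w = moreauObjective φ γ w ŵ :=
  have : Nonempty (Metric.closedBall w r) := ⟨⟨ŵ, hŵ⟩⟩
  (ballMoreauEnvelope_le hφ hγ hŵ).antisymm (le_ciInf fun x => hmin x.2)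

end MoreauEnvelope

section WeakConvexity

variable {E : Type*} [NormedAddCommGroup E] [InnerProductSpace ℝ E]

lemma weakly_convex_model_sum {ι : Type*} {s : Finset ι} {a : ι → ℝ} {f : ι → E → ℝ}
    {L : ι → E → E →L[ℝ] ℝ} {c : ℝ} (ha : ∀ i ∈ s, 0 ≤ a i) (hsum : ∑ i ∈ s, a i = 1)
    (hf : ∀ i m x, f i m + L i m (x - m) - c / 2 * ‖x - m‖ ^ 2 ≤ f i x) (m x : E) :
    ∑ i ∈ s, a i * f i m + (∑ i ∈ s, a i • L i m) (x - m) - c / 2 * ‖x - m‖ ^ 2 ≤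
      ∑ i ∈ s, a i * f i x := by
  calc ∑ i ∈ s, a i * f i m + (∑ i ∈ s, a i • L i m) (x - m) - c / 2 * ‖x - m‖ ^ 2
      = ∑ i ∈ s, a i * (f i m + L i m (x - m) - c / 2 * ‖x - m‖ ^ 2) := by
        simp only [_root_.sum_apply, smul_apply, smul_eq_mul, mul_sub, mul_add,
          sum_sub_distrib, sum_add_distrib, ← sum_mul, hsum, one_mul]
    _ ≤ ∑ i ∈ s, a i * f i x :=
        sum_le_sum fun i hi => mul_le_mul_of_nonneg_left (hf i m x) (ha i hi)

lemma moreauObjective_strong_model {φ : E → ℝ} {c : ℝ} {L : E → E →L[ℝ] ℝ}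
    (hφ : ∀ m x, φ m + L m (x - m) - c / 2 * ‖x - m‖ ^ 2 ≤ φ x) (γ : ℝ) (w m x : E) :
    moreauObjective φ γ w m + (L m + (1 / γ) • innerSL ℝ (m - w)) (x - m)
      + (1 / γ - c) / 2 * ‖x - m‖ ^ 2 ≤ moreauObjective φ γ w x := by
  have hsq : ‖x - w‖ ^ 2 = ‖m - w‖ ^ 2 + 2 * inner ℝ (m - w) (x - m) + ‖x - m‖ ^ 2 := by
    rw [← norm_add_sq_real, sub_add_sub_cancel']
  simp only [moreauObjective, add_apply, smul_apply, innerSL_apply_apply, smul_eq_mul]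
  linear_combination hφ m x - hsq / (2 * γ)

lemma IsMinOn.quadratic_growth {Φ : E → ℝ} {L : E → E →L[ℝ] ℝ} {μ : ℝ} {K : Set E} {ŵ x : E}
    (hΦ : ∀ m x, Φ m + L m (x - m) + μ / 2 * ‖x - m‖ ^ 2 ≤ Φ x) (hK : Convex ℝ K)
    (hmin : IsMinOn Φ K ŵ) (hŵ : ŵ ∈ K) (hx : x ∈ K) :
    Φ ŵ + μ / 2 * ‖x - ŵ‖ ^ 2 ≤ Φ x := by
  set v := x - ŵ
  -- Average the model at `ŵ + l • v` evaluated at `x` and at `ŵ`, then let `l → 0`.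
  have hsegment : ∀ l ∈ Set.Ioo (0 : ℝ) 1, μ / 2 * ‖v‖ ^ 2 * (1 - l) ≤ Φ x - Φ ŵ := by
    rintro l ⟨hl0, hl1⟩
    have hm : ŵ + l • v ∈ K := hK.add_smul_sub_mem hŵ hx ⟨hl0.le, hl1.le⟩
    have hx' := hΦ (ŵ + l • v) x
    have hŵ' := hΦ (ŵ + l • v) ŵ
    rw [show x - (ŵ + l • v) = (1 - l) • v by simp only [v]; module, map_smul, norm_smul,
      Real.norm_of_nonneg (by linarith), smul_eq_mul] at hx'
    rw [show ŵ - (ŵ + l • v) = (-l) • v by module, map_smul, norm_smul, norm_neg,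
      Real.norm_of_nonneg hl0.le, smul_eq_mul] at hŵ'
    have hmin' : Φ ŵ ≤ Φ (ŵ + l • v) := hmin hm
    refine le_of_mul_le_mul_left ?_ hl0
    nlinarith [mul_le_mul_of_nonneg_left hx' hl0.le,
      mul_le_mul_of_nonneg_left hŵ' (sub_nonneg.2 hl1.le)]
  have hlim : Tendsto (fun l : ℝ => μ / 2 * ‖v‖ ^ 2 * (1 - l)) (𝓝[>] 0)
      (𝓝 (μ / 2 * ‖v‖ ^ 2)) :=
    tendsto_nhdsWithin_of_tendsto_nhds <|
      (by fun_prop : Continuous fun l : ℝ => μ / 2 * ‖v‖ ^ 2 * (1 - l)).tendsto' 0 _ (by simp)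
  have := le_of_tendsto hlim (eventually_of_mem (Ioo_mem_nhdsGT one_pos) hsegment)
  linarith

lemma moreau_descent {F : E → ℝ} {L : E → E →L[ℝ] ℝ} {c γ r m₀ e : ℝ} {w w' ŵ : E}
    (hc : 0 < c) (hγ : γ = 1 / (2 * c))
    (hF : ∀ m x, F m + L m (x - m) - c / 2 * ‖x - m‖ ^ 2 ≤ F x) (hbdd : ∀ y, m₀ ≤ F y)
    (hmin : IsMinOn (moreauObjective F γ w) (Metric.closedBall w r) ŵ)
    (hŵ : ŵ ∈ Metric.closedBall w r) (hw' : w' ∈ Metric.closedBall w r)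
    (hexcess :
      moreauObjective F γ w w' - moreauObjective F γ w ŵ ≤ ‖w - ŵ‖ ^ 2 / (24 * γ) + e) :
    ‖w - ŵ‖ ^ 2 / γ ≤ 12 / 5 * (ballMoreauEnvelope F γ r w - ballMoreauEnvelope F γ r w')
      + 24 / 5 * e + 16 / 5 * max e 0 := by
  have hγ0 : 0 < γ := by rw [hγ]; positivity
  set D := ‖w - ŵ‖ ^ 2
  set q := ‖w' - ŵ‖ ^ 2
  have hgrowth := hmin.quadratic_growth (moreauObjective_strong_model hF γ w)
    (convex_closedBall w r) hŵ hw'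
  have hq : q / γ ≤ D / γ / 6 + 4 * e := by
    have : q / γ / 4 ≤ D / γ / 24 + e :=
      calc q / γ / 4 = (1 / γ - c) / 2 * q := by subst hγ; field_simp; ring
        _ ≤ moreauObjective F γ w w' - moreauObjective F γ w ŵ := by linarith
        _ ≤ D / (24 * γ) + e := hexcess
        _ = D / γ / 24 + e := by ring
    linarith
  have hD : 0 ≤ D / γ := by positivity
  rw [hmin.ballMoreauEnvelope_eq hbdd hγ0 hŵ]
  by_cases hnear : ŵ ∈ Metric.closedBall w' r
  · have hEnv := ballMoreauEnvelope_le hbdd hγ0 hnear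
    have hshift :
        moreauObjective F γ w' ŵ = moreauObjective F γ w ŵ - D / γ / 2 + q / γ / 2 := by
      simp only [moreauObjective, D, q]
      rw [norm_sub_rev ŵ w', norm_sub_rev ŵ w]
      ring
    linarith [le_max_right e 0]
  · -- The step left `ŵ` outside the next ball, so `D ≤ r² < q`, which forces `D / γ < 24 e / 5`.
    have hr : 0 ≤ r := dist_nonneg.trans hŵ
    have hfar : D / γ < q / γ := by
      rw [Metric.mem_closedBall, not_le, dist_eq_norm, norm_sub_rev] at hnear
      rw [Metric.mem_closedBall, dist_eq_norm, norm_sub_rev] at hŵ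
      gcongr
      exact (pow_le_pow_left₀ (norm_nonneg _) hŵ 2).trans_lt
        (pow_lt_pow_left₀ hnear hr two_ne_zero)
    have hEnv := ballMoreauEnvelope_le hbdd hγ0 (Metric.mem_closedBall_self hr : w' ∈ _)
    have hself : moreauObjective F γ w' w' ≤ moreauObjective F γ w w' := by
      simp only [moreauObjective, sub_self, norm_zero]
      norm_num
      positivity
    have hD24 : D / (24 * γ) = D / γ / 24 := by ring
    linarith [le_max_left e 0]

lemma adass_step {F Fhat Fbar Ffull : E → ℝ} {L : E → E →L[ℝ] ℝ}
    {c γ r m₀ n ζ θ₁ θ₂ k : ℝ} {w w' ŵ : E} (hc : 0 < c) (hγ : γ = 1 / (2 * c))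
    (hF : ∀ m x, F m + L m (x - m) - c / 2 * ‖x - m‖ ^ 2 ≤ F x) (hbdd : ∀ y, m₀ ≤ F y)
    (hmin : IsMinOn (moreauObjective F γ w) (Metric.closedBall w r) ŵ)
    (hŵ : ŵ ∈ Metric.closedBall w r) (hw' : w' ∈ Metric.closedBall w r)
    (hsplit : ∀ x, Ffull x = Fhat x + Fbar x)
    (hFfull : ∀ x, Ffull x = n * moreauObjective F γ w x)
    (hins : |Fbar ŵ - Fbar w'| ≤ ζ * (Ffull w' - Ffull ŵ))
    (hopt : Fhat w' - Fhat ŵ ≤ θ₁ * ‖w - ŵ‖ ^ 2 + θ₂)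
    (hpos : 0 < n * (1 - ζ)) (hk : 1 ≤ k) (hθ₁ : θ₁ ≤ n * (1 - ζ) / (24 * γ * k)) :
    ‖w - ŵ‖ ^ 2 / γ ≤ 12 / 5 * (ballMoreauEnvelope F γ r w - ballMoreauEnvelope F γ r w')
        + 24 / 5 * (θ₂ / (n * (1 - ζ))) + 16 / 5 * max (θ₂ / (n * (1 - ζ))) 0 ∧
      k * -(θ₂ / (n * (1 - ζ))) ≤ ‖w - ŵ‖ ^ 2 / γ / 24 := by
  have hγ0 : 0 < γ := by rw [hγ]; positivity
  have hexcess : n * (1 - ζ) * (moreauObjective F γ w w' - moreauObjective F γ w ŵ) ≤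
      θ₁ * ‖w - ŵ‖ ^ 2 + θ₂ := by
    have := one_sub_mul_sub_le_of_insignificant hsplit hins hopt
    rw [hFfull, hFfull] at this
    linarith
  obtain ⟨hΔ, hke⟩ := excess_bounds_of_mul_excess_le hpos hk hγ0 (sq_nonneg _)
    (sub_nonneg.2 (hmin hw')) hexcess hθ₁
  exact ⟨moreau_descent hc hγ hF hbdd hmin hŵ hw' hΔ, hke⟩

end WeakConvexity

theorem stmt11_general (d n T : ℕ) (hn : 0 < n) (hT : 0 < T)
    (f : Fin n → EuclideanSpace ℝ (Fin d) → ℝ)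
    (c : ℝ) (hc : 0 < c)
    (hwc : ∀ (i : Fin n) (w w' : EuclideanSpace ℝ (Fin d)),
      f i w' ≥ f i w + fderiv ℝ (f i) w (w' - w) - c / 2 * ‖w' - w‖ ^ 2)
    (γ : ℝ) (hγ : γ = 1 / (2 * c))
    (r : ℝ) (hr : 0 < r)
    (F : EuclideanSpace ℝ (Fin d) → ℝ)
    (hF : ∀ x, F x = (1 / n) * ∑ i, f i x)
    (wstar : EuclideanSpace ℝ (Fin d)) (hstar : ∀ x, F wstar ≤ F x)
    (S : ℕ → Finset (Fin n)) (hSne : ∀ t ∈ Finset.Icc 1 T, (S t).Nonempty)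
    (w : ℕ → EuclideanSpace ℝ (Fin d))
    (hball : ∀ t ∈ Finset.Icc 1 T, w (t + 1) ∈ Metric.closedBall (w t) r)
    (fS : Finset (Fin n) → EuclideanSpace ℝ (Fin d) → ℝ)
    (hfS : ∀ (Q : Finset (Fin n)) (x : EuclideanSpace ℝ (Fin d)),
      fS Q x = (1 / Q.card) * ∑ i ∈ Q, f i x)
    (Fhat Fbar Ffull : ℕ → EuclideanSpace ℝ (Fin d) → ℝ)
    (hFhat : ∀ t x, Fhat t x = (S t).card * (fS (S t) x + ‖x - w t‖ ^ 2 / (2 * γ)))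
    (hFbar : ∀ t x, Fbar t x =
      ((n : ℝ) - (S t).card) * (fS (S t)ᶜ x + ‖x - w t‖ ^ 2 / (2 * γ)))
    (hFfull : ∀ t x, Ffull t x = n * (F x + ‖x - w t‖ ^ 2 / (2 * γ)))
    (what : ℕ → EuclideanSpace ℝ (Fin d))
    (hwhat_mem : ∀ t ∈ Finset.Icc 1 T, what t ∈ Metric.closedBall (w t) r)
    (hwhat_min : ∀ t ∈ Finset.Icc 1 T, ∀ x ∈ Metric.closedBall (w t) r,
      F (what t) + ‖what t - w t‖ ^ 2 / (2 * γ) ≤ F x + ‖x - w t‖ ^ 2 / (2 * γ))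
    (G : ℕ → EuclideanSpace ℝ (Fin d))
    (hG : ∀ t, G t = (1 / γ) • (w t - what t))
    (ζf θ₁ θ₂f : ℕ → ℝ) (ζ δ θ₂ : ℝ) (hζlt : ζ < 1)
    (hins : ∀ t ∈ Finset.Icc 1 T,
      |Fbar t (what t) - Fbar t (w (t + 1))| ≤
        ζf t * (Ffull t (w (t + 1)) - Ffull t (what t)))
    (hζf : ∀ t ∈ Finset.Icc 1 T, ζf t ≤ ζ)
    (hδ : ∀ t ∈ Finset.Icc 1 T, F (w t) - F wstar ≤ δ)
    (hopt : ∀ t ∈ Finset.Icc 1 T, ∀ x ∈ Metric.closedBall (w t) r,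
      Fhat t (w (t + 1)) - Fhat t x ≤ θ₁ t * ‖w t - x‖ ^ 2 + θ₂f t)
    (hθ₁ : ∀ t ∈ Finset.Icc 1 T, θ₁ t ≤ n * (1 - ζ) / (24 * γ * (S t).card))
    (hθ₂ : ∀ t ∈ Finset.Icc 1 T, θ₂f t ≤ θ₂ / t) :
    2 / (T * (T + 1)) * ∑ t ∈ Finset.Icc 1 T, (t : ℝ) * ‖G t‖ ^ 2 ≤
      16 * δ / (γ * (T + 1)) +
        48 * θ₂ / (γ * T * (T + 1)) *
          ∑ t ∈ Finset.Icc 1 T, (S t).card / (n * (1 - ζf t)) := by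
  have hγ0 : 0 < γ := by rw [hγ]; positivity
  have hpos : ∀ t ∈ Icc 1 T, 0 < (n : ℝ) * (1 - ζf t) := fun t ht =>
    mul_pos (Nat.cast_pos.2 hn) (by linarith [hζf t ht])
  have hFmodel : ∀ m x, F m + (∑ i, (1 / (n : ℝ)) • fderiv ℝ (f i) m) (x - m)
      - c / 2 * ‖x - m‖ ^ 2 ≤ F x := by
    simpa only [hF, mul_sum] using weakly_convex_model_sum (s := univ) (fun _ _ => by positivity)
      (by simp [(Nat.cast_pos.2 hn).ne']) hwc
  have hsplit : ∀ t x, Ffull t x = Fhat t x + Fbar t x := fun t x => by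
    have := card_mul_avg_add_compl (S t) (f · x) (‖x - w t‖ ^ 2 / (2 * γ))
    rw [Fintype.card_fin] at this
    rw [hFfull, hFhat, hFbar, hfS, hfS, hF, this]
  have hstep := fun t ht => adass_step hc hγ hFmodel hstar (isMinOn_iff.2 (hwhat_min t ht))
    (hwhat_mem t ht) (hball t ht) (hsplit t) (hFfull t) (hins t ht)
    (hopt t ht _ (hwhat_mem t ht)) (hpos t ht)
    (Nat.one_le_cast.2 (card_pos.2 (hSne t ht)))
    ((hθ₁ t ht).trans (by gcongr; exact hζf t ht))
  have hGnorm : ∀ t, ‖G t‖ ^ 2 = ‖w t - what t‖ ^ 2 / γ / γ := fun t => by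
    rw [hG, norm_smul, mul_pow, Real.norm_of_nonneg (by positivity)]
    field_simp
  simp only [hGnorm]
  exact two_div_mul_sum_mul_div_le hT hγ0 (sum_mul_le_of_descent
    (M := fun t => ballMoreauEnvelope F γ r (w t)) (fun t ht => (hstep t ht).1)
    (fun t ht => (hstep t ht).2) (fun t ht => Nat.one_le_cast.2 (card_pos.2 (hSne t ht)))
    (fun t ht => (le_div_iff₀' (Nat.cast_pos.2 (mem_Icc.1 ht).1)).1 (hθ₂ t ht)) hpos
    (fun t ht => (ballMoreauEnvelope_le_self hstar hγ0 hr.le).trans (by linarith [hδ t ht]))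
    (le_ballMoreauEnvelope hstar hγ0 hr.le) (by linarith [hδ 1 (left_mem_Icc.2 hT), hstar (w 1)]))

/-- Deterministic version of Theorem 5 (ADASS convergence for the full objective): with
`c`-weakly convex losses, `γ = 1/(2c)`, insignificance of the discarded part `F̄_t` at
`w_{t+1}` w.r.t. `(F_t, B(w_t, r))` with `ζ_t ≤ ζ < 1`, bounded suboptimality
`F(w_t) − F(w*) ≤ δ`, and the inner-solver guarantee on `F̂_t`, the weighted average of
the squared Moreau-envelope gradients `G_t = (w_t − ŵ_t)/γ` of `f_{[n]}` satisfies
`(2/(T(T+1))) ∑ t‖G_t‖² ≤ 16δ/(γ(T+1)) + (48θ₂/(γT(T+1))) ∑ |S_t|/(n(1−ζ_t))`. -/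
theorem stmt11 (d n T : ℕ) (hn : 0 < n) (hT : 0 < T)
    (f : Fin n → EuclideanSpace ℝ (Fin d) → ℝ)
    (c : ℝ) (hc : 0 < c)
    (hdiff : ∀ i, Differentiable ℝ (f i))
    (hwc : ∀ (i : Fin n) (w w' : EuclideanSpace ℝ (Fin d)),
      f i w' ≥ f i w + fderiv ℝ (f i) w (w' - w) - c / 2 * ‖w' - w‖ ^ 2)
    (γ : ℝ) (hγ : γ = 1 / (2 * c))
    (r : ℝ) (hr : 0 < r)
    (F : EuclideanSpace ℝ (Fin d) → ℝ)
    (hF : ∀ x, F x = (1 / n) * ∑ i, f i x)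
    (wstar : EuclideanSpace ℝ (Fin d)) (hstar : ∀ x, F wstar ≤ F x)
    (S : ℕ → Finset (Fin n)) (hSne : ∀ t ∈ Finset.Icc 1 T, (S t).Nonempty)
    (w : ℕ → EuclideanSpace ℝ (Fin d))
    (hball : ∀ t ∈ Finset.Icc 1 T, w (t + 1) ∈ Metric.closedBall (w t) r)
    (fS : Finset (Fin n) → EuclideanSpace ℝ (Fin d) → ℝ)
    (hfS : ∀ (Q : Finset (Fin n)) (x : EuclideanSpace ℝ (Fin d)),
      fS Q x = (1 / Q.card) * ∑ i ∈ Q, f i x)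
    (Fhat Fbar Ffull : ℕ → EuclideanSpace ℝ (Fin d) → ℝ)
    (hFhat : ∀ t x, Fhat t x = (S t).card * (fS (S t) x + ‖x - w t‖ ^ 2 / (2 * γ)))
    (hFbar : ∀ t x, Fbar t x =
      ((n : ℝ) - (S t).card) * (fS (S t)ᶜ x + ‖x - w t‖ ^ 2 / (2 * γ)))
    (hFfull : ∀ t x, Ffull t x = n * (F x + ‖x - w t‖ ^ 2 / (2 * γ)))
    (what : ℕ → EuclideanSpace ℝ (Fin d))
    (hwhat_mem : ∀ t ∈ Finset.Icc 1 T, what t ∈ Metric.closedBall (w t) r)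
    (hwhat_min : ∀ t ∈ Finset.Icc 1 T, ∀ x ∈ Metric.closedBall (w t) r,
      F (what t) + ‖what t - w t‖ ^ 2 / (2 * γ) ≤ F x + ‖x - w t‖ ^ 2 / (2 * γ))
    (G : ℕ → EuclideanSpace ℝ (Fin d))
    (hG : ∀ t, G t = (1 / γ) • (w t - what t))
    (ζf θ₁ θ₂f : ℕ → ℝ) (ζ δ θ₂ : ℝ) (hζlt : ζ < 1)
    (hins : ∀ t ∈ Finset.Icc 1 T,
      |Fbar t (what t) - Fbar t (w (t + 1))| ≤
        ζf t * (Ffull t (w (t + 1)) - Ffull t (what t)))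
    (hζf : ∀ t ∈ Finset.Icc 1 T, ζf t ≤ ζ)
    (hδ : ∀ t ∈ Finset.Icc 1 T, F (w t) - F wstar ≤ δ)
    (hopt : ∀ t ∈ Finset.Icc 1 T, ∀ x ∈ Metric.closedBall (w t) r,
      Fhat t (w (t + 1)) - Fhat t x ≤ θ₁ t * ‖w t - x‖ ^ 2 + θ₂f t)
    (hθ₁ : ∀ t ∈ Finset.Icc 1 T, θ₁ t ≤ n * (1 - ζ) / (24 * γ * (S t).card))
    (hθ₂ : ∀ t ∈ Finset.Icc 1 T, θ₂f t ≤ θ₂ / t) :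
    2 / (T * (T + 1)) * ∑ t ∈ Finset.Icc 1 T, (t : ℝ) * ‖G t‖ ^ 2 ≤
      16 * δ / (γ * (T + 1)) +
        48 * θ₂ / (γ * T * (T + 1)) *
          ∑ t ∈ Finset.Icc 1 T, (S t).card / (n * (1 - ζf t)) :=
  stmt11_general d n T hn hT f c hc hwc γ hγ r hr F hF wstar hstar S hSne w hball fS hfS Fhat Fbar
    Ffull hFhat hFbar hFfull what hwhat_mem hwhat_min G hG ζf θ₁ θ₂f ζ δ θ₂ hζlt hins hζf hδ hopt
    hθ₁ hθ₂
end
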